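/- Let Φ be a completely positive linear map on L(ℂ^m ⊗ ℂ^n) with Kraus decomposition Φ(X) = Σᵢ Aᵢ X Aᵢ*. Suppose Φ maps every operator of the form c|w⟩⟨w| with w separable to an operator of rank at most one. Then for every standard basis vector e_h of ℂ^m ⊗ ℂ^n of the form e_j ⊗ e_ℓ, the nonzero vectors among {Aᵢ e_h}ᵢ are pairwise parallel. -/

import Mathlib

/-!
With `c = 1` and `w = e_j ⊗ e_ℓ` the operator `T = Σᵢ Aᵢ |w⟩⟨w| Aᵢ*` is `Σᵢ |Aᵢ w⟩⟨Aᵢ w|`.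
It is positive and `⟪x, T x⟫ = Σᵢ |⟪Aᵢ w, x⟫|²`, so its kernel is orthogonal to every `Aᵢ w`
and its range is the span of the `Aᵢ w`. Rank at most one then makes that span a line.
-/

noncomputable section

/-- The elementary tensor `a ⊗ b` in `ℂ^m ⊗ ℂ^n ≅ ℂ^(m×n)`. -/
def tens {m n : ℕ} (a : EuclideanSpace ℂ (Fin m)) (b : EuclideanSpace ℂ (Fin n)) :
    EuclideanSpace ℂ (Fin m × Fin n) :=
  WithLp.toLp 2 (fun p : Fin m × Fin n => a p.1 * b p.2)

/-- The rank-one operator `|w⟩⟨w| : z ↦ ⟨w, z⟩ w`. -/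
def proj {m n : ℕ} (w : EuclideanSpace ℂ (Fin m × Fin n)) :
    EuclideanSpace ℂ (Fin m × Fin n) →ₗ[ℂ] EuclideanSpace ℂ (Fin m × Fin n) :=
  ((innerSL ℂ w).smulRight w).toLinearMap

open InnerProductSpace Submodule

section SumRankOneSelf

variable {𝕜 E ι : Type*} [RCLike 𝕜] [NormedAddCommGroup E] [InnerProductSpace 𝕜 E] [Fintype ι]

theorem inner_sum_rankOne_self_apply (v : ι → E) (x : E) :
    inner 𝕜 x ((∑ i, (rankOne 𝕜 (v i) (v i) : E →ₗ[𝕜] E)) x) =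
      ((∑ i, ‖inner 𝕜 (v i) x‖ ^ 2 : ℝ) : 𝕜) := by
  simp only [LinearMap.coe_sum, Finset.sum_apply, ContinuousLinearMap.coe_coe, rankOne_apply,
    inner_sum, inner_smul_right, ← inner_conj_symm x (v _), RCLike.mul_conj]
  push_cast
  rfl

theorem inner_eq_zero_of_sum_rankOne_self_apply_eq_zero {v : ι → E} {x : E}
    (hx : (∑ i, (rankOne 𝕜 (v i) (v i) : E →ₗ[𝕜] E)) x = 0) (i : ι) :
    inner 𝕜 (v i) x = 0 := by
  have hsum : ∑ i, ‖inner 𝕜 (v i) x‖ ^ 2 = 0 := by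
    have := inner_sum_rankOne_self_apply (𝕜 := 𝕜) v x
    rwa [hx, inner_zero_right, eq_comm, RCLike.ofReal_eq_zero] at this
  have := (Finset.sum_eq_zero_iff_of_nonneg fun i _ => sq_nonneg _).mp hsum i (Finset.mem_univ i)
  simpa using this

theorem range_sum_rankOne_self [FiniteDimensional 𝕜 E] (v : ι → E) :
    LinearMap.range (∑ i, (rankOne 𝕜 (v i) (v i) : E →ₗ[𝕜] E)) = span 𝕜 (Set.range v) := by
  set T := ∑ i, (rankOne 𝕜 (v i) (v i) : E →ₗ[𝕜] E)
  refine le_antisymm ?_ (span_le.mpr ?_)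
  · rintro _ ⟨x, rfl⟩
    simp only [T, LinearMap.sum_apply, ContinuousLinearMap.coe_coe, rankOne_apply]
    exact sum_mem fun i _ => smul_mem _ _ (subset_span ⟨i, rfl⟩)
  · rintro _ ⟨i, rfl⟩
    have hT : T.IsPositive := LinearMap.isPositive_sum _ fun i _ =>
      (ContinuousLinearMap.isPositive_toLinearMap_iff _).mpr (isPositive_rankOne_self (v i))
    -- `T` is self-adjoint, so its range is the orthogonal complement of its kernel
    rw [SetLike.mem_coe, ← hT.adjoint_eq, ← LinearMap.orthogonal_ker, mem_orthogonal]
    intro x hx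
    rw [← inner_conj_symm, inner_eq_zero_of_sum_rankOne_self_apply_eq_zero hx i, map_zero]

end SumRankOneSelf

theorem exists_smul_eq_of_finrank_span_range_le_one {K V ι : Type*} [DivisionRing K]
    [AddCommGroup V] [Module K V] [Finite ι] {v : ι → V}
    (hv : Module.finrank K (span K (Set.range v)) ≤ 1) {i : ι} (hi : v i ≠ 0) (j : ι) :
    ∃ t : K, v j = t • v i := by
  have : FiniteDimensional K (span K (Set.range v)) := .span_of_finite K (Set.finite_range v)
  have hspan : K ∙ v i = span K (Set.range v) :=
    eq_of_le_of_finrank_le (span_mono (by simp)) (by rwa [finrank_span_singleton hi])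
  obtain ⟨t, ht⟩ := mem_span_singleton.mp (hspan ▸ subset_span ⟨j, rfl⟩ : v j ∈ K ∙ v i)
  exact ⟨t, ht.symm⟩

theorem comp_proj_comp_adjoint {m n : ℕ}
    (A : EuclideanSpace ℂ (Fin m × Fin n) →ₗ[ℂ] EuclideanSpace ℂ (Fin m × Fin n))
    (w : EuclideanSpace ℂ (Fin m × Fin n)) :
    A ∘ₗ proj w ∘ₗ LinearMap.adjoint A = (rankOne ℂ (A w) (A w) : _ →ₗ[ℂ] _) := by
  ext x
  simp [proj, LinearMap.adjoint_inner_right]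

theorem stmt18 {m n : ℕ} {ι : Type*} [Fintype ι]
    (A : ι → (EuclideanSpace ℂ (Fin m × Fin n) →ₗ[ℂ] EuclideanSpace ℂ (Fin m × Fin n)))
    (h : ∀ (c : ℂ) (a : EuclideanSpace ℂ (Fin m)) (b : EuclideanSpace ℂ (Fin n)),
      a ≠ 0 → b ≠ 0 →
      Module.finrank ℂ (LinearMap.range
        (∑ i, A i ∘ₗ (c • proj (tens a b)) ∘ₗ LinearMap.adjoint (A i))) ≤ 1) :
    ∀ (j : Fin m) (ℓ : Fin n) (i₁ i₂ : ι),
      A i₁ (tens (EuclideanSpace.single j 1) (EuclideanSpace.single ℓ 1)) ≠ 0 →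
      A i₂ (tens (EuclideanSpace.single j 1) (EuclideanSpace.single ℓ 1)) ≠ 0 →
      ∃ t : ℂ, A i₂ (tens (EuclideanSpace.single j 1) (EuclideanSpace.single ℓ 1)) =
        t • A i₁ (tens (EuclideanSpace.single j 1) (EuclideanSpace.single ℓ 1)) := by
  intro j ℓ i₁ i₂ h₁ _
  have hrank := h 1 (EuclideanSpace.single j 1) (EuclideanSpace.single ℓ 1)
    ((PiLp.single_eq_zero_iff _ _).not.mpr one_ne_zero)
    ((PiLp.single_eq_zero_iff _ _).not.mpr one_ne_zero)
  rw [one_smul, Finset.sum_congr rfl fun i _ => comp_proj_comp_adjoint (A i) _,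
    range_sum_rankOne_self] at hrank
  exact exists_smul_eq_of_finrank_span_range_le_one hrank h₁ i₂
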